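/- Let (W, b, ρ) be a radial neural network with L layers and widths vector n = (n₀, …, n_L), where each activation ρ_i = h_i^{(n_i)} for some h_i : ℝ → ℝ. Let n^red be the reduced widths vector of n. Then there exist weights W^red_i ∈ ℝ^{n^red_i × n^red_{i−1}} and biases b^red_i ∈ ℝ^{n^red_i} (i = 1, …, L), and orthogonal matrices Q_i ∈ O(n_i) (i = 1, …, L−1), such that for every i the i-th partial feedforward function satisfies F_i = Q_i ∘ inc_i ∘ F^red_i (with Q₀ = id, Q_L = id, inc_i : ℝ^{n^red_i} ↪ ℝ^{n_i} the standard inclusion), and in particular the feedforward function of the compressed radial neural network (W^red, b^red, ρ^red) with activations ρ^red_i = h_i^{(n^red_i)} equals the feedforward function of (W, b, ρ). -/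

import Mathlib

open scoped Classical
open Metric Set

noncomputable section

abbrev Euc (n : ℕ) := EuclideanSpace ℝ (Fin n)

def mulVecE {m n : ℕ} (W : Matrix (Fin m) (Fin n) ℝ) (v : Euc n) : Euc m :=
  WithLp.toLp 2 (fun j => ∑ k, W j k * v k)

/-- The radial rescaling function h⁽ᵏ⁾ : ℝᵏ → ℝᵏ associated to h : ℝ → ℝ,
v ↦ (h ‖v‖ / ‖v‖) • v for v ≠ 0, and 0 ↦ 0. -/
def radialRescale {n : ℕ} (h : ℝ → ℝ) (v : Euc n) : Euc n :=
  if v = 0 then 0 else (h ‖v‖ / ‖v‖) • v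

/-- The partial feedforward functions of a fully connected network with widths
width 0, width 1, …: F₀ = id and F_{i+1}(x) = ρᵢ(Wᵢ Fᵢ(x) + bᵢ).
(Activation ρ i, weights W i and biases b i belong to layer i+1.) -/
def feedforward (width : ℕ → ℕ)
    (W : ∀ i : ℕ, Matrix (Fin (width (i+1))) (Fin (width i)) ℝ)
    (b : ∀ i : ℕ, Euc (width (i+1)))
    (ρ : ∀ i : ℕ, Euc (width (i+1)) → Euc (width (i+1))) :
    (i : ℕ) → Euc (width 0) → Euc (width i)
  | 0 => fun x => x
  | (i+1) => fun x => ρ i (mulVecE (W i) (feedforward width W b ρ i x) + b i)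

/-- The reduced widths vector: nʳᵉᵈ₀ = n₀, nʳᵉᵈᵢ = min(nᵢ, nʳᵉᵈ_{i−1} + 1) for
0 < i < L, and nʳᵉᵈ_L = n_L. -/
def reducedWidth (width : ℕ → ℕ) (L : ℕ) : ℕ → ℕ
  | 0 => width 0
  | (i+1) => if i + 1 < L then min (width (i+1)) (reducedWidth width L i + 1) else width (i+1)

lemma reducedWidth_le (width : ℕ → ℕ) (L : ℕ) (i : ℕ) :
    reducedWidth width L i ≤ width i := by
  cases i with
  | zero => simp [reducedWidth]
  | succ i =>
    rw [reducedWidth]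
    split
    · exact min_le_left _ _
    · exact le_rfl

/-- The standard inclusion ℝᵏ ↪ ℝˡ into the first k coordinates. -/
def incl (k l : ℕ) (v : Euc k) : Euc l :=
  WithLp.toLp 2 (fun j => if h : (j : ℕ) < k then v ⟨j, h⟩ else 0)


/-! Radial rescalings commute with linear isometries, so linear isometric embeddings `Tᵢ`
(with `T₀ = id`) that intertwine the affine maps of two networks also intertwine their partial
feedforward functions. Take `Tᵢ = Qᵢ ∘ incᵢ`. Once `Qᵢ` is fixed, the affine map `y ↦ Wᵢ (Qᵢ (incᵢ y)) + bᵢ` on `ℝ^{nʳᵉᵈᵢ}` has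
image in the span of its linear part's range and `bᵢ`, of dimension at most `nʳᵉᵈᵢ + 1`; a
rotation `Q_{i+1}` moves that span into the first `nʳᵉᵈ_{i+1}` coordinates, unless
`nʳᵉᵈ_{i+1} = n_{i+1}`, in which case `Q_{i+1} = 1` works. -/

open Matrix (toEuclideanLin)
open Module

lemma mulVecE_eq_toEuclideanLin {m n : ℕ} (A : Matrix (Fin m) (Fin n) ℝ) (v : Euc n) :
    mulVecE A v = toEuclideanLin A v := by
  ext j
  simp [mulVecE, Matrix.mulVec, dotProduct]

lemma mulVecE_toEuclideanLin_symm {m n : ℕ} (f : Euc n →ₗ[ℝ] Euc m) (v : Euc n) :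
    mulVecE (toEuclideanLin.symm f) v = f v := by
  rw [mulVecE_eq_toEuclideanLin, LinearEquiv.apply_symm_apply]

lemma toEuclideanLin_symm_mem_orthogonalGroup {n : ℕ} (e : Euc n ≃ₗᵢ[ℝ] Euc n) :
    toEuclideanLin.symm (e : Euc n →ₗ[ℝ] Euc n) ∈ Matrix.orthogonalGroup (Fin n) ℝ :=
  e.toMatrix_mem_unitaryGroup (EuclideanSpace.basisFun _ ℝ) (EuclideanSpace.basisFun _ ℝ)

lemma toEuclideanLin_symm_refl {n : ℕ} :
    toEuclideanLin.symm (LinearIsometryEquiv.refl ℝ (Euc n) : Euc n →ₗ[ℝ] Euc n) = 1 := by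
  rw [LinearEquiv.symm_apply_eq, Matrix.toLpLin_one]
  rfl

lemma incl_self {n : ℕ} (v : Euc n) : incl n n v = v := by
  ext j
  simp [incl]

lemma norm_incl {k l : ℕ} (hkl : k ≤ l) (v : Euc k) : ‖incl k l v‖ = ‖v‖ := by
  simp only [EuclideanSpace.norm_eq]
  congr 1
  refine (Fintype.sum_of_injective _ (Fin.castLE_injective hkl) _ _ ?_ fun j => ?_).symm
  · intro j hj
    have hjk : ¬(j : ℕ) < k := fun hlt => hj ⟨⟨j, hlt⟩, rfl⟩
    simp [incl, hjk]
  · simp [incl]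

def inclₗᵢ {k l : ℕ} (hkl : k ≤ l) : Euc k →ₗᵢ[ℝ] Euc l where
  toFun := incl k l
  map_add' u v := by ext j; by_cases hj : (j : ℕ) < k <;> simp [incl, hj]
  map_smul' c v := by ext j; by_cases hj : (j : ℕ) < k <;> simp [incl, hj]
  norm_map' := norm_incl hkl

def takeₗ {k l : ℕ} (hkl : k ≤ l) : Euc l →ₗ[ℝ] Euc k where
  toFun v := WithLp.toLp 2 (Fin.take k hkl v.ofLp)
  map_add' _ _ := rfl
  map_smul' _ _ := rfl

@[simp]
lemma takeₗ_apply {k l : ℕ} (hkl : k ≤ l) (v : Euc l) (j : Fin k) :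
    takeₗ hkl v j = v (Fin.castLE hkl j) :=
  rfl

lemma incl_takeₗ {k l : ℕ} (hkl : k ≤ l) {v : Euc l} (hv : ∀ j : Fin l, k ≤ j → v j = 0) :
    incl k l (takeₗ hkl v) = v := by
  ext j
  by_cases hj : (j : ℕ) < k
  · simp [incl, hj]
  · simp [incl, hj, hv j (by omega)]

lemma radialRescale_map {m n : ℕ} (h : ℝ → ℝ) (f : Euc m →ₗᵢ[ℝ] Euc n) (v : Euc m) :
    radialRescale h (f v) = f (radialRescale h v) := by
  by_cases hv : v = 0
  · simp [radialRescale, hv]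
  · simp [radialRescale, hv, f.norm_map, map_eq_zero_iff f f.injective]

theorem feedforward_map {n n' : ℕ → ℕ}
    {W : ∀ i : ℕ, Matrix (Fin (n (i+1))) (Fin (n i)) ℝ} {b : ∀ i : ℕ, Euc (n (i+1))}
    {ρ : ∀ i : ℕ, Euc (n (i+1)) → Euc (n (i+1))}
    {W' : ∀ i : ℕ, Matrix (Fin (n' (i+1))) (Fin (n' i)) ℝ} {b' : ∀ i : ℕ, Euc (n' (i+1))}
    {ρ' : ∀ i : ℕ, Euc (n' (i+1)) → Euc (n' (i+1))}
    (T : ∀ i, Euc (n' i) → Euc (n i))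
    (hT : ∀ i y, mulVecE (W i) (T i y) + b i = T (i+1) (mulVecE (W' i) y + b' i))
    (hρ : ∀ i y, ρ i (T (i+1) y) = T (i+1) (ρ' i y)) (x : Euc (n' 0)) :
    ∀ i, feedforward n W b ρ i (T 0 x) = T i (feedforward n' W' b' ρ' i x)
  | 0 => rfl
  | i + 1 => by simp only [feedforward, feedforward_map T hT hρ x i, hT, hρ]

theorem exists_linearIsometryEquiv_apply_eq_zero {n r : ℕ} (S : Submodule ℝ (Euc n))
    (hS : finrank ℝ S ≤ r) :
    ∃ e : Euc n ≃ₗᵢ[ℝ] Euc n, ∀ x ∈ S, ∀ j : Fin n, r ≤ j → e x j = 0 := by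
  have hSn : finrank ℝ S ≤ n := by simpa using S.finrank_le
  let L : S →ₗᵢ[ℝ] Euc n := (inclₗᵢ hSn).comp (stdOrthonormalBasis ℝ S).repr.toLinearIsometry
  refine ⟨L.extend.toLinearIsometryEquiv rfl, fun x hx j hj => ?_⟩
  have hLx : L.extend x = incl _ n ((stdOrthonormalBasis ℝ S).repr ⟨x, hx⟩) :=
    L.extend_apply ⟨x, hx⟩
  have hjS : ¬(j : ℕ) < finrank ℝ S := by omega
  simp [hLx, incl, hjS]

theorem exists_affine_eq_linearIsometryEquiv_incl_of_lt {m n r : ℕ} (hrn : r ≤ n) (hmr : m < r)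
    (f : Euc m →ₗ[ℝ] Euc n) (c : Euc n) :
    ∃ (e : Euc n ≃ₗᵢ[ℝ] Euc n) (W : Matrix (Fin r) (Fin m) ℝ) (b : Euc r),
      ∀ y, f y + c = e (incl r n (mulVecE W y + b)) := by
  let S := LinearMap.range f ⊔ ℝ ∙ c
  have hS : finrank ℝ S ≤ r := calc
    finrank ℝ S ≤ finrank ℝ (LinearMap.range f) + finrank ℝ (ℝ ∙ c) :=
      Submodule.finrank_add_le_finrank_add_finrank _ _
    _ ≤ m + 1 := by
      gcongr
      · simpa using f.finrank_range_le
      · simpa using finrank_span_le_card ({c} : Set (Euc n))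
    _ ≤ r := hmr
  obtain ⟨e, he⟩ := exists_linearIsometryEquiv_apply_eq_zero S hS
  refine ⟨e.symm, toEuclideanLin.symm (takeₗ hrn ∘ₗ e.toLinearMap ∘ₗ f), takeₗ hrn (e c),
    fun y => ?_⟩
  have hmem : f y + c ∈ S :=
    add_mem (Submodule.mem_sup_left ⟨y, rfl⟩)
      (Submodule.mem_sup_right (Submodule.mem_span_singleton_self c))
  rw [mulVecE_toEuclideanLin_symm, LinearIsometryEquiv.eq_symm_apply]
  simpa using (incl_takeₗ hrn (he _ hmem)).symm

theorem exists_affine_eq_linearIsometryEquiv_incl {m n r : ℕ} (hrn : r ≤ n)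
    (hmr : m < r ∨ r = n) (f : Euc m →ₗ[ℝ] Euc n) (c : Euc n) :
    ∃ e : Euc n ≃ₗᵢ[ℝ] Euc n, (r = n → e = LinearIsometryEquiv.refl ℝ _) ∧
      ∃ (W : Matrix (Fin r) (Fin m) ℝ) (b : Euc r),
        ∀ y, f y + c = e (incl r n (mulVecE W y + b)) := by
  by_cases hr : r = n
  · subst hr
    exact ⟨.refl ℝ _, fun _ => rfl, toEuclideanLin.symm f, c, fun y => by
      rw [mulVecE_toEuclideanLin_symm, incl_self]; rfl⟩
  · obtain ⟨e, W, b, he⟩ :=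
      exists_affine_eq_linearIsometryEquiv_incl_of_lt hrn (hmr.resolve_right hr) f c
    exact ⟨e, fun h => absurd h hr, W, b, he⟩

theorem exists_compressed_layers {width r : ℕ → ℕ} (hr : ∀ i, r i ≤ width i)
    (hstep : ∀ i, r i < r (i+1) ∨ r (i+1) = width (i+1))
    (W : ∀ i : ℕ, Matrix (Fin (width (i+1))) (Fin (width i)) ℝ)
    (b : ∀ i : ℕ, Euc (width (i+1))) :
    ∃ (Wred : ∀ i : ℕ, Matrix (Fin (r (i+1))) (Fin (r i)) ℝ) (bred : ∀ i : ℕ, Euc (r (i+1)))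
      (e : ∀ i, Euc (width i) ≃ₗᵢ[ℝ] Euc (width i)),
      (∀ i, r i = width i → e i = LinearIsometryEquiv.refl ℝ _) ∧
      ∀ i y, mulVecE (W i) (e i (incl (r i) (width i) y)) + b i
        = e (i+1) (incl (r (i+1)) (width (i+1)) (mulVecE (Wred i) y + bred i)) := by
  have hlayer (i : ℕ) (e : Euc (width i) ≃ₗᵢ[ℝ] Euc (width i)) :=
    exists_affine_eq_linearIsometryEquiv_incl (hr (i+1)) (hstep i)
      (toEuclideanLin (W i) ∘ₗ e.toLinearMap ∘ₗ (inclₗᵢ (hr i)).toLinearMap) (b i)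
  -- the rotation in layer `i+1` depends on the one in layer `i`, hence the recursion
  choose next hnext Wred bred hWred using hlayer
  let e (i : ℕ) : Euc (width i) ≃ₗᵢ[ℝ] Euc (width i) :=
    Nat.rec (motive := fun i => Euc (width i) ≃ₗᵢ[ℝ] Euc (width i)) (.refl ℝ _) next i
  refine ⟨fun i => Wred i (e i), fun i => bred i (e i), e, fun i => ?_, fun i y => ?_⟩
  · cases i with
    | zero => exact fun _ => rfl
    | succ i => exact hnext i (e i)
  · rw [mulVecE_eq_toEuclideanLin]
    exact hWred i (e i) y

lemma reducedWidth_lt_succ_or_eq (width : ℕ → ℕ) (L i : ℕ) :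
    reducedWidth width L i < reducedWidth width L (i+1) ∨
      reducedWidth width L (i+1) = width (i+1) := by
  rw [reducedWidth]
  split
  · omega
  · exact Or.inr rfl

lemma reducedWidth_self (width : ℕ → ℕ) (L : ℕ) : reducedWidth width L L = width L := by
  cases L with
  | zero => rfl
  | succ i => rw [reducedWidth, if_neg (lt_irrefl _)]

/-- **model compression.** Let (W, b, ρ) be a radial neural network with
L layers, widths n₀, …, n_L and activations ρᵢ = hᵢ^{(nᵢ)}.  Then there exist reduced
weights and biases, and orthogonal matrices Qᵢ ∈ O(nᵢ) with Q₀ = 1 and Q_L = 1, such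
that each partial feedforward function satisfies Fᵢ = Qᵢ ∘ incᵢ ∘ Fʳᵉᵈᵢ, where the
reduced network has widths nʳᵉᵈ and activations hᵢ^{(nʳᵉᵈᵢ)}; in particular (taking
i = L, where nʳᵉᵈ_L = n_L and Q_L = 1) the two feedforward functions coincide. -/
theorem model_compression (L : ℕ) (width : ℕ → ℕ)
    (W : ∀ i : ℕ, Matrix (Fin (width (i+1))) (Fin (width i)) ℝ)
    (b : ∀ i : ℕ, Euc (width (i+1)))
    (h : ℕ → ℝ → ℝ) :
    ∃ (Wred : ∀ i : ℕ, Matrix (Fin (reducedWidth width L (i+1))) (Fin (reducedWidth width L i)) ℝ)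
      (bred : ∀ i : ℕ, Euc (reducedWidth width L (i+1)))
      (Q : ∀ i : ℕ, Matrix (Fin (width i)) (Fin (width i)) ℝ),
      (∀ i, Q i ∈ Matrix.orthogonalGroup (Fin (width i)) ℝ) ∧
      Q 0 = 1 ∧ Q L = 1 ∧
      (∀ i ≤ L, ∀ x : Euc (width 0),
        feedforward width W b (fun i => radialRescale (h i)) i x
          = mulVecE (Q i) (incl (reducedWidth width L i) (width i)
              (feedforward (reducedWidth width L) Wred bred
                (fun i => radialRescale (h i)) i x))) ∧
      (∀ x : Euc (width 0),
        feedforward width W b (fun i => radialRescale (h i)) L x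
          = incl (reducedWidth width L L) (width L)
              (feedforward (reducedWidth width L) Wred bred
                (fun i => radialRescale (h i)) L x)) := by
  obtain ⟨Wred, bred, e, he_refl, he_layer⟩ :=
    exists_compressed_layers (reducedWidth_le width L) (reducedWidth_lt_succ_or_eq width L) W b
  have he_last : e L = .refl ℝ _ := he_refl L (reducedWidth_self width L)
  have hF (i : ℕ) (x : Euc (width 0)) :
      feedforward width W b (fun i => radialRescale (h i)) i x
        = e i (incl (reducedWidth width L i) (width i)
            (feedforward (reducedWidth width L) Wred bred
              (fun i => radialRescale (h i)) i x)) := by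
    have hρ (i : ℕ) (y : Euc (reducedWidth width L (i+1))) :=
      radialRescale_map (h i) ((e (i+1)).toLinearIsometry.comp (inclₗᵢ (reducedWidth_le ..))) y
    have hx : e 0 (incl (reducedWidth width L 0) (width 0) x) = x := by
      rw [he_refl 0 rfl]
      exact incl_self x
    simpa only [hx] using feedforward_map (fun i y => e i (incl _ _ y)) he_layer hρ x i
  refine ⟨Wred, bred, fun i => toEuclideanLin.symm (e i : Euc (width i) →ₗ[ℝ] Euc (width i)),
    fun i => toEuclideanLin_symm_mem_orthogonalGroup (e i), ?_, ?_, ?_, fun x => ?_⟩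
  · beta_reduce
    rw [he_refl 0 rfl, toEuclideanLin_symm_refl]
  · beta_reduce
    rw [he_last, toEuclideanLin_symm_refl]
  · exact fun i _ x => (hF i x).trans (mulVecE_toEuclideanLin_symm _ _).symm
  · rw [hF, he_last]
    rfl

end
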